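/- arXiv:2303.07681 — 2 statements merged into one kernel-verified Lean document; each statement's English description precedes it below -/
import Mathlib

section
/- Let Γ be a finite connected (G,s)-geodesic-transitive digraph for some s ≥ 2, and let N be a normal subgroup of G with at least 3 orbits on V(Γ). Then the quotient digraph Γ_N is either directed (its adjacency relation is antisymmetric) or an undirected complete graph (every ordered pair of distinct N-orbits is an arc). -/
namespace SGeodesicDigraph

variable {V : Type*}

/-- `p : Fin (n+1) → V` is an `n`-arc of the digraph with adjacency relation `A`. -/
def IsArcSeq (A : V → V → Prop) (n : ℕ) (p : Fin (n + 1) → V) : Prop :=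
  ∀ i : Fin n, A (p i.castSucc) (p i.succ)

/-- The directed distance from `u` to `v`: the length of a shortest directed path. -/
noncomputable def ddist (A : V → V → Prop) (u v : V) : ℕ :=
  sInf {n : ℕ | ∃ p : Fin (n + 1) → V, IsArcSeq A n p ∧ p 0 = u ∧ p (Fin.last n) = v}

/-- `p` is an `n`-geodesic: an `n`-arc whose endpoints are at directed distance `n`. -/
def IsGeodesic (A : V → V → Prop) (n : ℕ) (p : Fin (n + 1) → V) : Prop :=
  IsArcSeq A n p ∧ ddist A (p 0) (p (Fin.last n)) = n

/-- Connectivity of the underlying undirected graph. -/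
def DConnected (A : V → V → Prop) : Prop :=
  ∀ u v : V, Relation.ReflTransGen (fun x y => A x y ∨ A y x) u v

/-- The diameter: the maximum of the directed distances. -/
noncomputable def diam (A : V → V → Prop) : ℕ :=
  sSup {d : ℕ | ∃ u v : V, ddist A u v = d}

/-- The subgroup `G` of permutations of the vertices consists of automorphisms of `A`. -/
def AutActs (A : V → V → Prop) (G : Subgroup (Equiv.Perm V)) : Prop :=
  ∀ g ∈ G, ∀ u v : V, A u v ↔ A (g u) (g v)

/-- `G` is transitive on the arcs. -/
def ArcTrans (A : V → V → Prop) (G : Subgroup (Equiv.Perm V)) : Prop :=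
  ∀ u v x y : V, A u v → A x y → ∃ g ∈ G, g u = x ∧ g v = y

/-- `G` is transitive on the 2-arcs. -/
def TwoArcTrans (A : V → V → Prop) (G : Subgroup (Equiv.Perm V)) : Prop :=
  ∀ u v w u' v' w' : V, A u v → A v w → A u' v' → A v' w' →
    ∃ g ∈ G, g u = u' ∧ g v = v' ∧ g w = w'

/-- `Γ` is `(G,s)`-geodesic-transitive: `G` is transitive on the `i`-geodesics for all `i ≤ s`. -/
def GeoTrans (A : V → V → Prop) (G : Subgroup (Equiv.Perm V)) (s : ℕ) : Prop :=
  ∀ i ≤ s, ∀ p q : Fin (i + 1) → V, IsGeodesic A i p → IsGeodesic A i q →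
    ∃ g ∈ G, ∀ j : Fin (i + 1), g (p j) = q j

/-- every vertex has `k` out-neighbours and `k` in-neighbours. -/
def HasValency (A : V → V → Prop) (k : ℕ) : Prop :=
  ∀ v : V, {u : V | A v u}.ncard = k ∧ {u : V | A u v}.ncard = k

/-- The digraph is a circuit (a directed cycle) on `r ≥ 3` vertices. -/
def IsCircuit (A : V → V → Prop) : Prop :=
  ∃ r : ℕ, 3 ≤ r ∧ ∃ e : ZMod r ≃ V, ∀ i j : ZMod r, A (e i) (e j) ↔ j = i + 1

/-- `u` and `v` lie in the same `N`-orbit. -/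
def SameOrb (N : Subgroup (Equiv.Perm V)) (u v : V) : Prop := ∃ n ∈ N, n u = v

/-- `N` is transitive on the vertex set. -/
def SubTrans (N : Subgroup (Equiv.Perm V)) : Prop := ∀ u v : V, SameOrb N u v

/-- `N` is regular on the vertex set: transitive with trivial point stabilizers. -/
def SubRegular (N : Subgroup (Equiv.Perm V)) : Prop :=
  SubTrans N ∧ ∀ n ∈ N, ∀ v : V, n v = v → n = 1

/-- `N` is a normal subgroup of `G`. -/
def NormalIn (N G : Subgroup (Equiv.Perm V)) : Prop :=
  N ≤ G ∧ ∀ g ∈ G, ∀ n ∈ N, g * n * g⁻¹ ∈ N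

/-- `N` has at least three orbits on the vertex set. -/
def AtLeastThreeOrbits (N : Subgroup (Equiv.Perm V)) : Prop :=
  ∃ u v w : V, ¬ SameOrb N u v ∧ ¬ SameOrb N u w ∧ ¬ SameOrb N v w

/-- `N` has at most two orbits on the vertex set. -/
def AtMostTwoOrbits (N : Subgroup (Equiv.Perm V)) : Prop :=
  ∃ u v : V, ∀ w : V, SameOrb N u w ∨ SameOrb N v w

/-- `N` has exactly two orbits on the vertex set. -/
def ExactlyTwoOrbits (N : Subgroup (Equiv.Perm V)) : Prop :=
  AtMostTwoOrbits N ∧ ¬ SubTrans N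

/-- The `N`-orbit of `v`. -/
def orb (N : Subgroup (Equiv.Perm V)) (v : V) : Set V := {u : V | SameOrb N v u}

/-- The vertex set of the quotient digraph `Γ_N`: the `N`-orbits. -/
abbrev OrbV (N : Subgroup (Equiv.Perm V)) : Type _ := {S : Set V // ∃ v : V, S = orb N v}

/-- The adjacency relation of the quotient digraph `Γ_N`: `(A,B)` is an arc iff some
`a ∈ A`, `b ∈ B` form an arc of `Γ`. -/
def QRel (A : V → V → Prop) (N : Subgroup (Equiv.Perm V)) (S T : OrbV N) : Prop :=
  ∃ a ∈ S.1, ∃ b ∈ T.1, A a b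

/-- `G/N` (acting via `G`, with `g` sending each orbit to its image) is transitive on the
`i`-geodesics of the quotient digraph `Γ_N` for all `i ≤ s`. -/
def QuotGeoTrans (A : V → V → Prop) (G N : Subgroup (Equiv.Perm V)) (s : ℕ) : Prop :=
  ∀ i ≤ s, ∀ p q : Fin (i + 1) → OrbV N,
    IsGeodesic (QRel A N) i p → IsGeodesic (QRel A N) i q →
      ∃ g ∈ G, ∀ j : Fin (i + 1), ⇑g '' (p j).1 = (q j).1

/-- `G/N` is transitive on the arcs of the quotient digraph `Γ_N`. -/
def QuotArcTrans (A : V → V → Prop) (G N : Subgroup (Equiv.Perm V)) : Prop :=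
  ∀ S T S' T' : OrbV N, QRel A N S T → QRel A N S' T' →
    ∃ g ∈ G, ⇑g '' S.1 = S'.1 ∧ ⇑g '' T.1 = T'.1

/-- `G/N` is quasiprimitive on the `N`-orbits: by the correspondence theorem, the nontrivial
normal subgroups of `G/N` are exactly the `M/N` with `N < M` normal in `G`, and (as `N ≤ M`)
`M/N` is transitive on the `N`-orbits iff `M` is transitive on the vertices. -/
def QuasiprimitiveQuotient (G N : Subgroup (Equiv.Perm V)) : Prop :=
  ∀ M : Subgroup (Equiv.Perm V), NormalIn M G → N < M → SubTrans M

/-- `G/N` is bi-quasiprimitive on the `N`-orbits: every nontrivial normal subgroup `M/N` of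
`G/N` has at most two orbits, and some nontrivial normal subgroup has exactly two orbits. -/
def BiQuasiprimitiveQuotient (G N : Subgroup (Equiv.Perm V)) : Prop :=
  (∀ M : Subgroup (Equiv.Perm V), NormalIn M G → N < M → AtMostTwoOrbits M) ∧
  (∃ M : Subgroup (Equiv.Perm V), NormalIn M G ∧ N < M ∧ ExactlyTwoOrbits M)

/-- The permutation group `G` is quasiprimitive on the vertex set. -/
def Quasiprimitive (G : Subgroup (Equiv.Perm V)) : Prop :=
  SubTrans G ∧ ∀ M : Subgroup (Equiv.Perm V), NormalIn M G → M ≠ ⊥ → SubTrans M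

/-- The permutation group `G` is bi-quasiprimitive on the vertex set. -/
def BiQuasiprimitive (G : Subgroup (Equiv.Perm V)) : Prop :=
  SubTrans G ∧ (∀ M : Subgroup (Equiv.Perm V), NormalIn M G → M ≠ ⊥ → AtMostTwoOrbits M) ∧
  ∃ M : Subgroup (Equiv.Perm V), NormalIn M G ∧ M ≠ ⊥ ∧ ExactlyTwoOrbits M

section Aux

variable {A : V → V → Prop} {N G : Subgroup (Equiv.Perm V)} {u v w : V} {s : ℕ}

lemma sameOrb_refl (N : Subgroup (Equiv.Perm V)) (v : V) : SameOrb N v v :=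
  ⟨1, one_mem N, rfl⟩

lemma sameOrb_symm (h : SameOrb N u v) : SameOrb N v u := by
  obtain ⟨n, hn, rfl⟩ := h
  exact ⟨n⁻¹, inv_mem hn, Equiv.symm_apply_apply n u⟩

lemma sameOrb_trans (h1 : SameOrb N u v) (h2 : SameOrb N v w) : SameOrb N u w := by
  obtain ⟨n, hn, rfl⟩ := h1
  obtain ⟨m, hm, rfl⟩ := h2
  exact ⟨m * n, mul_mem hm hn, Equiv.Perm.mul_apply m n u⟩

lemma orbv_sameOrb {S : OrbV N} (ha : u ∈ S.1) (hb : v ∈ S.1) : SameOrb N u v := by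
  obtain ⟨x, hx⟩ := S.2
  rw [hx] at ha hb
  exact sameOrb_trans (sameOrb_symm ha) hb

lemma orbv_mem {S : OrbV N} (ha : u ∈ S.1) (h : SameOrb N u v) : v ∈ S.1 := by
  obtain ⟨x, hx⟩ := S.2
  rw [hx] at ha ⊢
  exact sameOrb_trans ha h

lemma orbv_eq {S T : OrbV N} (ha : u ∈ S.1) (hb : v ∈ T.1) (h : SameOrb N u v) : S = T := by
  obtain ⟨x, hx⟩ := S.2
  obtain ⟨y, hy⟩ := T.2
  rw [hx] at ha; rw [hy] at hb
  apply Subtype.ext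
  rw [hx, hy]
  ext z
  constructor
  · intro hz
    exact sameOrb_trans hb (sameOrb_trans (sameOrb_symm h) (sameOrb_trans (sameOrb_symm ha) hz))
  · intro hz
    exact sameOrb_trans ha (sameOrb_trans h (sameOrb_trans (sameOrb_symm hb) hz))

lemma g_sameOrb (hNG : NormalIn N G) {g : Equiv.Perm V} (hg : g ∈ G) (h : SameOrb N u v) :
    SameOrb N (g u) (g v) := by
  obtain ⟨n, hn, rfl⟩ := h
  refine ⟨g * n * g⁻¹, hNG.2 g hg n hn, ?_⟩
  simp [Equiv.Perm.mul_apply]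

lemma arcSeq_pair (h : A u v) : IsArcSeq A 1 ![u, v] := by
  intro i
  fin_cases i
  simpa using h

lemma arcSeq_triple (h1 : A u v) (h2 : A v w) : IsArcSeq A 2 ![u, v, w] := by
  intro i
  fin_cases i <;> simp_all

lemma ddist_arc (hirr : ∀ x : V, ¬ A x x) (h : A u v) : ddist A u v = 1 := by
  have hmem1 : 1 ∈ {n : ℕ | ∃ p : Fin (n + 1) → V, IsArcSeq A n p ∧ p 0 = u ∧ p (Fin.last n) = v} :=
    ⟨![u, v], arcSeq_pair h, by simp, by simp [Fin.last]⟩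
  have hle : ddist A u v ≤ 1 := Nat.sInf_le hmem1
  have hmem := Nat.sInf_mem (⟨1, hmem1⟩ : Set.Nonempty
    {n : ℕ | ∃ p : Fin (n + 1) → V, IsArcSeq A n p ∧ p 0 = u ∧ p (Fin.last n) = v})
  have h0 : ddist A u v ≠ 0 := by
    intro h0
    have hmem' : ddist A u v ∈
        {n : ℕ | ∃ p : Fin (n + 1) → V, IsArcSeq A n p ∧ p 0 = u ∧ p (Fin.last n) = v} := hmem
    rw [h0] at hmem'
    obtain ⟨p, _, hp0, hpl⟩ := hmem'
    have : u = v := by rw [← hp0, ← hpl]; rfl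
    exact hirr u (this ▸ h)
  omega

lemma geodesic_pair (hirr : ∀ x : V, ¬ A x x) (h : A u v) : IsGeodesic A 1 ![u, v] := by
  refine ⟨arcSeq_pair h, ?_⟩
  simpa [Fin.last] using ddist_arc hirr h

lemma arc_trans (hirr : ∀ x : V, ¬ A x x) (hgt : GeoTrans A G s) (hs : 1 ≤ s)
    {x y : V} (h : A u v) (h' : A x y) : ∃ g ∈ G, g u = x ∧ g v = y := by
  obtain ⟨g, hg, hj⟩ := hgt 1 hs ![u, v] ![x, y] (geodesic_pair hirr h) (geodesic_pair hirr h')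
  exact ⟨g, hg, by simpa using hj 0, by simpa using hj 1⟩

lemma two_arc_cases (hirr : ∀ x : V, ¬ A x x) (h1 : A u v) (h2 : A v w) :
    u = w ∨ A u w ∨ IsGeodesic A 2 ![u, v, w] := by
  have hmem2 : 2 ∈ {n : ℕ | ∃ p : Fin (n + 1) → V, IsArcSeq A n p ∧ p 0 = u ∧ p (Fin.last n) = w} :=
    ⟨![u, v, w], arcSeq_triple h1 h2, by simp, by simp [Fin.last]⟩
  have hle : ddist A u w ≤ 2 := Nat.sInf_le hmem2
  have hmem := Nat.sInf_mem (⟨2, hmem2⟩ : Set.Nonempty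
    {n : ℕ | ∃ p : Fin (n + 1) → V, IsArcSeq A n p ∧ p 0 = u ∧ p (Fin.last n) = w})
  have h012 : ddist A u w = 0 ∨ ddist A u w = 1 ∨ ddist A u w = 2 := by omega
  have hmem' : ddist A u w ∈
      {n : ℕ | ∃ p : Fin (n + 1) → V, IsArcSeq A n p ∧ p 0 = u ∧ p (Fin.last n) = w} := hmem
  rcases h012 with h0 | h1' | h2'
  · rw [h0] at hmem'
    obtain ⟨p, _, hp0, hpl⟩ := hmem'
    left; rw [← hp0, ← hpl]; rfl
  · rw [h1'] at hmem'
    obtain ⟨p, hp, hp0, hpl⟩ := hmem'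
    right; left
    have := hp 0
    rw [show ((0 : Fin 1).castSucc) = 0 from rfl, show ((0 : Fin 1).succ) = Fin.last 1 from rfl,
      hp0, hpl] at this
    exact this
  · right; right
    refine ⟨arcSeq_triple h1 h2, ?_⟩
    simpa [Fin.last] using h2'

lemma subTrans_of_arcs_in_orbit (hconn : DConnected A)
    (H : ∀ u v : V, A u v → SameOrb N u v) (u v : V) : SameOrb N u v := by
  induction hconn u v with
  | refl => exact sameOrb_refl N u
  | tail _ hstep ih =>
      rcases hstep with h | h
      · exact sameOrb_trans ih (H _ _ h)
      · exact sameOrb_trans ih (sameOrb_symm (H _ _ h))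

/-- The orbit of a vertex, as a vertex of the quotient. -/
def toOrb (N : Subgroup (Equiv.Perm V)) (v : V) : OrbV N := ⟨orb N v, v, rfl⟩

end Aux

/-- **Lemma 3.3.** Let `Γ` be a finite connected `(G,s)`-geodesic-transitive digraph for some
`s ≥ 2`, and let `N` be a normal subgroup of `G` with at least `3` orbits on the vertices.
Then the quotient digraph `Γ_N` is either directed (its adjacency relation is antisymmetric)
or an undirected complete graph (every ordered pair of distinct `N`-orbits is an arc). -/
theorem quotient_directed_or_complete {V : Type*} [Fintype V] (A : V → V → Prop)
    (G N : Subgroup (Equiv.Perm V)) (s : ℕ)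
    (hA : ∀ u v : V, A u v → ¬ A v u)
    (hconn : DConnected A)
    (hGaut : AutActs A G)
    (hgt : GeoTrans A G s) (hs : 2 ≤ s)
    (hNG : NormalIn N G)
    (h3 : AtLeastThreeOrbits N) :
    (∀ S T : OrbV N, QRel A N S T → ¬ QRel A N T S) ∨
      (∀ S T : OrbV N, S ≠ T → QRel A N S T) := by
  classical
  have hirr : ∀ x : V, ¬ A x x := fun x hx => hA x x hx hx
  by_cases hdir : ∀ S T : OrbV N, QRel A N S T → ¬ QRel A N T S
  · exact Or.inl hdir
  push_neg at hdir
  obtain ⟨S₀, T₀, hST, hTS⟩ := hdir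
  obtain ⟨x, hxS, y, hyT, hxy⟩ := hST
  obtain ⟨y₂, hy₂T, x₂, hx₂S, hyx₂⟩ := hTS
  obtain ⟨n, hn, hny⟩ := orbv_sameOrb hy₂T hyT
  have harc2 : A y (n x₂) := by
    rw [← hny]
    exact (hGaut n (hNG.1 hn) y₂ x₂).1 hyx₂
  have hnx₂S : (n : Equiv.Perm V) x₂ ∈ S₀.1 := orbv_mem hx₂S ⟨n, hn, rfl⟩
  have hxnx : SameOrb N x (n x₂) := orbv_sameOrb hxS hnx₂S
  have hnotall : ¬ (∀ u v : V, A u v → SameOrb N u v) := by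
    intro H
    obtain ⟨u, v, w, h1, _, _⟩ := h3
    exact h1 (subTrans_of_arcs_in_orbit hconn H u v)
  have hgeo : IsGeodesic A 2 ![x, y, n x₂] := by
    rcases two_arc_cases hirr hxy harc2 with heq | harc | hgeo
    · rw [← heq] at harc2
      exact (hA x y hxy harc2).elim
    · exfalso
      apply hnotall
      intro u v huv
      obtain ⟨g, hg, hgu, hgv⟩ := arc_trans hirr hgt (by omega) harc huv
      have := g_sameOrb hNG hg hxnx
      rwa [hgu, hgv] at this
    · exact hgeo
  have H2geo : ∀ u v w : V, IsGeodesic A 2 ![u, v, w] → SameOrb N u w := by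
    intro u v w hg'
    obtain ⟨g, hg, hj⟩ := hgt 2 hs ![x, y, n x₂] ![u, v, w] hgeo hg'
    have h0 := hj 0
    have h2 := hj 2
    simp only [Matrix.cons_val_zero] at h0
    simp only [Matrix.cons_val_two, Matrix.tail_cons, Matrix.head_cons] at h2
    have := g_sameOrb hNG hg hxnx
    rwa [h0, h2] at this
  have Hsym : ∀ S T : OrbV N, QRel A N S T → QRel A N T S := by
    rintro S T ⟨a, haS, b, hbT, hab⟩
    obtain ⟨g, hg, hga, hgb⟩ := arc_trans hirr hgt (by omega) hxy hab
    refine ⟨b, hbT, g (n x₂), ?_, ?_⟩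
    · have := g_sameOrb hNG hg hxnx
      rw [hga] at this
      exact orbv_mem haS this
    · have := (hGaut g hg y (n x₂)).1 harc2
      rwa [hgb] at this
  have Htriple : ∀ S T U : OrbV N, QRel A N S T → QRel A N T U → S = U ∨ QRel A N S U := by
    rintro S T U ⟨a, haS, b, hbT, hab⟩ ⟨b', hb'T, c', hc'U, hbc⟩
    obtain ⟨m, hm, hmb⟩ := orbv_sameOrb hb'T hbT
    have hbc2 : A b (m c') := by
      rw [← hmb]
      exact (hGaut m (hNG.1 hm) b' c').1 hbc
    have hcU : (m : Equiv.Perm V) c' ∈ U.1 := orbv_mem hc'U ⟨m, hm, rfl⟩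
    rcases two_arc_cases hirr hab hbc2 with heq | harc | hge
    · exact Or.inl (orbv_eq haS hcU (heq ▸ sameOrb_refl N a))
    · exact Or.inr ⟨a, haS, m c', hcU, harc⟩
    · exact Or.inl (orbv_eq haS hcU (H2geo _ _ _ hge))
  right
  intro S T hne
  obtain ⟨vs, hvs⟩ := S.2
  obtain ⟨vt, hvt⟩ := T.2
  have hvsS : vs ∈ S.1 := by rw [hvs]; exact sameOrb_refl N vs
  have hvtT : vt ∈ T.1 := by rw [hvt]; exact sameOrb_refl N vt
  have key : ∀ w : V, Relation.ReflTransGen (fun x y => A x y ∨ A y x) vs w →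
      toOrb N w = S ∨ QRel A N S (toOrb N w) := by
    intro w hw
    induction hw with
    | refl => exact Or.inl (orbv_eq (sameOrb_refl N vs) hvsS (sameOrb_refl N vs))
    | @tail p q hpq hstep ih =>
        have hq : QRel A N (toOrb N p) (toOrb N q) := by
          rcases hstep with h | h
          · exact ⟨p, sameOrb_refl N p, q, sameOrb_refl N q, h⟩
          · exact Hsym _ _ ⟨q, sameOrb_refl N q, p, sameOrb_refl N p, h⟩
        rcases ih with heq | hq2
        · rw [heq] at hq
          exact Or.inr hq
        · rcases Htriple S (toOrb N p) (toOrb N q) hq2 hq with he | hq3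
          · exact Or.inl he.symm
          · exact Or.inr hq3
  have hTeq : toOrb N vt = T := orbv_eq (sameOrb_refl N vt) hvtT (sameOrb_refl N vt)
  rcases key vt (hconn vs vt) with heq | hq
  · exact (hne (heq.symm.trans hTeq)).elim
  · rwa [hTeq] at hq

end SGeodesicDigraph
end

section
/- Let Γ be a finite (G,2)-geodesic-transitive digraph of valency 4. Then for every arc (u,v) of Γ, |Γ^+(u) ∩ Γ^+(v)| ≠ 1. -/
namespace SGeodesicDigraph

variable {V : Type*}

private lemma ddist_eq_one' {A : V → V → Prop} (hA : ∀ u v : V, A u v → ¬ A v u)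
    {u v : V} (h : A u v) : ddist A u v = 1 := by
  have hne : u ≠ v := by rintro rfl; exact hA u u h h
  set S := {n : ℕ | ∃ p : Fin (n + 1) → V, IsArcSeq A n p ∧ p 0 = u ∧ p (Fin.last n) = v}
    with hS
  have h1 : 1 ∈ S := by
    refine ⟨![u, v], ?_, rfl, ?_⟩
    · intro i; fin_cases i; simpa using h
    · simp [Fin.last]
  have h0 : 0 ∉ S := by
    rintro ⟨p, -, hp0, hpl⟩
    have hpl' : p 0 = v := hpl
    exact hne (hp0.symm.trans hpl')
  have hmem := Nat.sInf_mem ⟨1, h1⟩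
  have hle := Nat.sInf_le h1
  have hne0 : sInf S ≠ 0 := fun hz => h0 (hz ▸ hmem)
  show sInf S = 1
  omega

private lemma ddist_eq_two' {A : V → V → Prop} (hA : ∀ u v : V, A u v → ¬ A v u)
    {u v c : V} (huv : A u v) (hvc : A v c) (hnuc : ¬ A u c) : ddist A u c = 2 := by
  have hne : u ≠ c := by rintro rfl; exact hA u v huv hvc
  set S := {n : ℕ | ∃ p : Fin (n + 1) → V, IsArcSeq A n p ∧ p 0 = u ∧ p (Fin.last n) = c}
    with hS
  have h2 : 2 ∈ S := by
    refine ⟨![u, v, c], ?_, rfl, ?_⟩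
    · intro i
      fin_cases i
      · simpa using huv
      · simpa using hvc
    · simp [Fin.last]
  have h0 : 0 ∉ S := by
    rintro ⟨p, -, hp0, hpl⟩
    have hpl' : p 0 = c := hpl
    exact hne (hp0.symm.trans hpl')
  have h1 : 1 ∉ S := by
    rintro ⟨p, hp, hp0, hpl⟩
    have h01 : A (p 0) (p (Fin.last 1)) := hp 0
    rw [hp0, hpl] at h01
    exact hnuc h01
  have hmem := Nat.sInf_mem ⟨2, h2⟩
  have hle := Nat.sInf_le h2
  have hne0 : sInf S ≠ 0 := fun hz => h0 (hz ▸ hmem)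
  have hne1 : sInf S ≠ 1 := fun hz => h1 (hz ▸ hmem)
  show sInf S = 2
  omega

private lemma image_common' {A : V → V → Prop} {G : Subgroup (Equiv.Perm V)}
    (hGaut : AutActs A G) {g : Equiv.Perm V} (hg : g ∈ G) (u v : V) :
    ⇑g '' ({t | A u t} ∩ {t | A v t}) = {t | A (g u) t} ∩ {t | A (g v) t} := by
  ext t
  constructor
  · rintro ⟨s, ⟨hs1, hs2⟩, rfl⟩
    exact ⟨(hGaut g hg u s).mp hs1, (hGaut g hg v s).mp hs2⟩
  · rintro ⟨h1, h2⟩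
    refine ⟨g⁻¹ t, ⟨?_, ?_⟩, (Equiv.Perm.inv_eq_iff_eq.mp (rfl : g⁻¹ t = g⁻¹ t)).symm⟩
    · show A u (g⁻¹ t); rw [hGaut g hg u (g⁻¹ t), (Equiv.Perm.inv_eq_iff_eq.mp (rfl : g⁻¹ t = g⁻¹ t)).symm]; exact h1
    · show A v (g⁻¹ t); rw [hGaut g hg v (g⁻¹ t), (Equiv.Perm.inv_eq_iff_eq.mp (rfl : g⁻¹ t = g⁻¹ t)).symm]; exact h2

/-- **Lemma 4.5.** Let `Γ` be a finite `(G,2)`-geodesic-transitive digraph of valency `4`.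
Then `|Γ⁺(u) ∩ Γ⁺(v)| ≠ 1` for every arc `(u,v)`. -/
theorem valency_four_common_outnbr_ne_one {V : Type*} [Fintype V] (A : V → V → Prop)
    (G : Subgroup (Equiv.Perm V))
    (hA : ∀ u v : V, A u v → ¬ A v u)
    (hGaut : AutActs A G)
    (hval : HasValency A 4)
    (hgt : GeoTrans A G 2) :
    ∀ u v : V, A u v → ({w : V | A u w} ∩ {w : V | A v w}).ncard ≠ 1 := by
  intro u v huv hcard
  obtain ⟨w, hw⟩ := Set.ncard_eq_one.mp hcard
  have hw' : A u w ∧ A v w := by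
    have hmem : w ∈ {t : V | A u t} ∩ {t : V | A v t} := by rw [hw]; exact rfl
    exact hmem
  have arcgeo : ∀ x y : V, A x y → IsGeodesic A 1 ![x, y] := by
    intro x y hxy
    constructor
    · intro i; fin_cases i; simpa using hxy
    · simpa using ddist_eq_one' hA hxy
  have transfer : ∀ x y : V, A x y → ({t : V | A x t} ∩ {t : V | A y t}).ncard = 1 := by
    intro x y hxy
    obtain ⟨g, hg, hmap⟩ :=
      hgt 1 one_le_two ![u, v] ![x, y] (arcgeo u v huv) (arcgeo x y hxy)
    have hu : g u = x := by simpa using hmap 0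
    have hv : g v = y := by simpa using hmap 1
    have himg := image_common' hGaut hg u v
    rw [hu, hv] at himg
    rw [← himg, Set.ncard_image_of_injective _ g.injective]
    exact hcard
  obtain ⟨z, hz⟩ := Set.ncard_eq_one.mp (transfer v w hw'.2)
  have hz' : A v z ∧ A w z := by
    have hmem : z ∈ {t : V | A v t} ∩ {t : V | A w t} := by rw [hz]; exact rfl
    exact hmem
  have hzw : z ≠ w := by rintro rfl; exact hA z z hz'.2 hz'.2
  have hnAuz : ¬ A u z := by
    intro h
    have hmem : z ∈ {t : V | A u t} ∩ {t : V | A v t} := ⟨h, hz'.1⟩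
    rw [hw] at hmem
    exact hzw hmem
  have hbne : ({t : V | A v t} \ {w, z}).Nonempty := by
    by_contra hempty
    have hsub : {t : V | A v t} ⊆ {w, z} := by
      intro t ht
      by_contra htn
      exact hempty ⟨t, ht, htn⟩
    have hle := Set.ncard_le_ncard hsub (Set.toFinite _)
    have h2 : ({w, z} : Set V).ncard ≤ 2 :=
      le_trans (Set.ncard_insert_le _ _) (by simp)
    have h4 : ({t : V | A v t}).ncard = 4 := (hval v).1
    omega
  obtain ⟨b, hbT, hbn⟩ := hbne
  have hbw : b ≠ w := fun h => hbn (by simp [h])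
  have hbz : b ≠ z := fun h => hbn (by simp [h])
  have hnAub : ¬ A u b := by
    intro h
    have hmem : b ∈ {t : V | A u t} ∩ {t : V | A v t} := ⟨h, hbT⟩
    rw [hw] at hmem
    exact hbw hmem
  have geo2 : ∀ c : V, A v c → ¬ A u c → IsGeodesic A 2 ![u, v, c] := by
    intro c hvc hnuc
    constructor
    · intro i
      fin_cases i
      · simpa using huv
      · simpa using hvc
    · simpa using ddist_eq_two' hA huv hvc hnuc
  obtain ⟨g, hg, hmap⟩ :=
    hgt 2 le_rfl ![u, v, z] ![u, v, b] (geo2 z hz'.1 hnAuz) (geo2 b hbT hnAub)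
  have hgu : g u = u := by simpa using hmap 0
  have hgv : g v = v := by simpa using hmap 1
  have hgz : g z = b := by simpa using hmap 2
  have himg := image_common' hGaut hg u v
  rw [hgu, hgv, hw] at himg
  have hgw : g w = w := by
    have hmem : g w ∈ ({w} : Set V) := by
      rw [← himg]; exact ⟨w, rfl, rfl⟩
    exact hmem
  have hgzmem : g z ∈ {t : V | A v t} ∩ {t : V | A w t} := by
    constructor
    · show A v (g z)
      rw [← hgv]
      exact (hGaut g hg v z).mp hz'.1
    · show A w (g z)
      rw [← hgw]
      exact (hGaut g hg w z).mp hz'.2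
  rw [hz] at hgzmem
  rw [hgz] at hgzmem
  exact hbz hgzmem

end SGeodesicDigraph
end
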